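/- Let k be a field and G a finite group with H^1(G, k) = 0, where k denotes the trivial kG-module. Let M be a finite-dimensional kG-module with composition factors W_1, ..., W_r, exactly m of which are trivial, and set n = Σ_i dim_k H^1(G, W_i). If n < m, then the fixed-point subspace M^G has dimension at least m − n. -/

import Mathlib

open CategoryTheory

noncomputable section

/-- The `k`-linear representation of `G` attached to a module `M` over the group
algebra `k[G]` (defined on the type synonym `RestrictScalars k (MonoidAlgebra k G) M`). -/
def grpRep (k G : Type) [Field k] [Group G] (M : Type) [AddCommGroup M]
    [Module (MonoidAlgebra k G) M] : Rep k G :=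
  @Rep.of k G _ _ _ _ (RestrictScalars.module k _ M)
    (Representation.ofModule (k := k) (G := G) M)

/-- The dimension over `k` of the first group cohomology `H¹(G, M)` of a `k[G]`-module `M`. -/
def h1Dim (k G : Type) [Field k] [Group G] (M : Type) [AddCommGroup M]
    [Module (MonoidAlgebra k G) M] : ℕ :=
  Module.finrank k (groupCohomology.H1 (grpRep k G M))

/-- A `k[G]`-module is trivial if it is isomorphic to the 1-dimensional trivial module `k`. -/
def IsTrivialFactor (k G : Type) [Field k] [Group G] (M : Type) [AddCommGroup M]
    [Module (MonoidAlgebra k G) M] : Prop :=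
  Nonempty (grpRep k G M ≅ Rep.trivial k G k)

/-- The subquotient `N'/N` attached to a pair of submodules `N ≤ N'`. -/
abbrev Subquot {k G : Type} [Field k] [Group G] {M : Type} [AddCommGroup M]
    [Module (MonoidAlgebra k G) M] (N N' : Submodule (MonoidAlgebra k G) M) : Type :=
  N' ⧸ Submodule.comap N'.subtype N

/-!
A short exact sequence `0 → A → B → C → 0` of representations gives the exact sequence
`0 → Aᴳ → Bᴳ → Cᴳ → H¹(G, A)`, hence `dim Aᴳ + dim Cᴳ ≤ dim Bᴳ + dim H¹(G, A)`. Applied to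
`0 → Nᵢ₊₁/Nᵢ → M/Nᵢ → M/Nᵢ₊₁ → 0` and summed down the composition series, this bounds
`dim (M/N₀)ᴳ` below by the number of trivial factors (each has a one-dimensional space of
invariants) minus the sum of the `dim H¹(G, Wᵢ)`; trivial factors add nothing to that sum because
`H¹(G, k) = 0`.
-/

open groupCohomology

theorem finrank_add_finrank_le_of_exact {K V₁ V₂ V₃ V₄ : Type*} [DivisionRing K]
    [AddCommGroup V₁] [Module K V₁] [AddCommGroup V₂] [Module K V₂]
    [AddCommGroup V₃] [Module K V₃] [AddCommGroup V₄] [Module K V₄]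
    [FiniteDimensional K V₂] [FiniteDimensional K V₄]
    {f : V₁ →ₗ[K] V₂} {g : V₂ →ₗ[K] V₃} {h : V₃ →ₗ[K] V₄}
    (hf : Function.Injective f) (hfg : Function.Exact f g) (hgh : Function.Exact g h) :
    Module.finrank K V₁ + Module.finrank K V₃ ≤ Module.finrank K V₂ + Module.finrank K V₄ := by
  have : FiniteDimensional K V₁ := .of_injective f hf
  have : FiniteDimensional K V₃ := .of_exact (f := g) (g := h.rangeRestrict)
    (LinearMap.exact_iff.2 <| by rw [LinearMap.ker_rangeRestrict, hgh.linearMap_ker_eq])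
    h.surjective_rangeRestrict
  have hg := LinearMap.finrank_range_add_finrank_ker g
  have hh := LinearMap.finrank_range_add_finrank_ker h
  rw [hfg.linearMap_ker_eq, LinearMap.finrank_range_of_inj hf] at hg
  rw [hgh.linearMap_ker_eq] at hh
  have := (LinearMap.range h).finrank_le
  omega

def RestrictScalars.linearEquiv (R S M : Type*) [CommSemiring R] [Semiring S] [Algebra R S]
    [AddCommMonoid M] [Module S M] [Module R M] [IsScalarTower R S M] :
    M ≃ₗ[R] RestrictScalars R S M where
  __ := (RestrictScalars.addEquiv R S M).symm
  map_smul' c x := by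
    rw [RingHom.id_apply, RestrictScalars.smul_def, ← algebraMap_smul S c x]
    simp

namespace Submodule

variable {R M : Type*} [Ring R] [AddCommGroup M] [Module R M]

abbrev subquotToQuotient (p q : Submodule R M) : q ⧸ p.comap q.subtype →ₗ[R] M ⧸ p :=
  (p.comap q.subtype).mapQ p q.subtype le_rfl

theorem injective_subquotToQuotient (p q : Submodule R M) :
    Function.Injective (p.subquotToQuotient q) := by
  rw [← LinearMap.ker_eq_bot, ker_mapQ, mkQ_map_self]

theorem exact_subquotToQuotient_factor {p q : Submodule R M} (hpq : p ≤ q) :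
    Function.Exact (p.subquotToQuotient q) (factor hpq) := by
  rw [LinearMap.exact_iff, ker_mapQ, range_mapQ, range_subtype]
  simp

end Submodule

section Representations

variable {k G : Type} [Field k] [Group G]

instance [Finite G] (A : Rep k G) [FiniteDimensional k A] : FiniteDimensional k (H1 A) :=
  have : Fintype G := .ofFinite G
  .of_surjective (H1π A).hom ((ModuleCat.epi_iff_surjective _).1 inferInstance)

theorem finrank_invariants_add_le_of_shortExact [Finite G] {X : ShortComplex (Rep k G)}
    (hX : X.ShortExact) [FiniteDimensional k X.X₂] :
    Module.finrank k X.X₁.ρ.invariants + Module.finrank k X.X₃.ρ.invariants ≤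
      Module.finrank k X.X₂.ρ.invariants + Module.finrank k (H1 X.X₁) := by
  have : Mono X.f := hX.mono_f
  have : FiniteDimensional k X.X₁ :=
    .of_injective X.f.hom.toLinearMap ((Rep.mono_iff_injective X.f).1 this)
  have : FiniteDimensional k (H0 X.X₂) := .equiv (H0Iso X.X₂).toLinearEquiv.symm
  simp only [← (H0Iso _).toLinearEquiv.finrank_eq]
  exact finrank_add_finrank_le_of_exact
    ((ModuleCat.mono_iff_injective _).1 (mono_map_0_of_mono X.f))
    ((ShortComplex.ShortExact.moduleCat_exact_iff_function_exact _).1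
      (mapShortComplex₂_exact hX 0))
    ((ShortComplex.ShortExact.moduleCat_exact_iff_function_exact _).1
      (mapShortComplex₃_exact hX (i := 0) rfl))

theorem finrank_invariants_congr {A B : Rep.{0} k G} (i : A ≅ B) :
    Module.finrank k A.ρ.invariants = Module.finrank k B.ρ.invariants :=
  ((H0Iso A).symm ≪≫ (functor k G 0).mapIso i ≪≫ H0Iso B).toLinearEquiv.finrank_eq

theorem finrank_invariants_of_iso_trivial {A : Rep.{0} k G} (i : A ≅ Rep.trivial k G k) :
    Module.finrank k A.ρ.invariants = 1 := by
  rw [finrank_invariants_congr i, Representation.invariants_eq_top, finrank_top,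
    Module.finrank_self]

theorem finrank_H1_of_iso_trivial (hk : Subsingleton (H1 (Rep.trivial k G k)))
    {A : Rep.{0} k G} (i : A ≅ Rep.trivial k G k) : Module.finrank k (H1 A) = 0 :=
  have : Subsingleton ((functor k G 1).obj (Rep.trivial k G k)) := hk
  have : Subsingleton (H1 A) := ((functor k G 1).mapIso i).toLinearEquiv.toEquiv.subsingleton
  Module.finrank_zero_of_subsingleton

end Representations

section ModulesOverGroupAlgebra

variable {k G : Type} [Field k] [Group G] {M : Type} [AddCommGroup M]
  [Module (MonoidAlgebra k G) M]

instance [Module k M] [IsScalarTower k (MonoidAlgebra k G) M] [FiniteDimensional k M] :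
    FiniteDimensional k (grpRep k G M) :=
  .equiv (RestrictScalars.linearEquiv k (MonoidAlgebra k G) M)

def grpRepIso {M' : Type} [AddCommGroup M'] [Module (MonoidAlgebra k G) M']
    (e : M ≃ₗ[MonoidAlgebra k G] M') : grpRep k G M ≅ grpRep k G M' :=
  Rep.ofModuleMonoidAlgebra.mapIso e.toModuleIso

variable [Module k M] [IsScalarTower k (MonoidAlgebra k G) M] [FiniteDimensional k M] [Finite G]

theorem finrank_invariants_subquot_add_le {p q : Submodule (MonoidAlgebra k G) M} (hpq : p ≤ q) :
    Module.finrank k (grpRep k G (Subquot p q)).ρ.invariants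
        + Module.finrank k (grpRep k G (M ⧸ q)).ρ.invariants
      ≤ Module.finrank k (grpRep k G (M ⧸ p)).ρ.invariants + h1Dim k G (Subquot p q) := by
  have hX := (ModuleCat.shortComplex_shortExact
    (ModuleCat.shortComplexOfCompEqZero (p.subquotToQuotient q) (Submodule.factor hpq)
      (p.exact_subquotToQuotient_factor hpq).linearMap_comp_eq_zero)
    (p.exact_subquotToQuotient_factor hpq) (p.injective_subquotToQuotient q)
    (Submodule.factor_surjective hpq)).map_of_exact Rep.ofModuleMonoidAlgebra
  exact @finrank_invariants_add_le_of_shortExact k G _ _ _ _ hX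
    (inferInstanceAs (FiniteDimensional k (grpRep k G (M ⧸ p))))

theorem card_trivial_sub_sum_h1Dim_le_finrank_invariants_quotient
    (hk : Subsingleton (H1 (Rep.trivial k G k))) :
    ∀ (r : ℕ) (N : Fin (r + 1) → Submodule (MonoidAlgebra k G) M),
      Monotone N → N (Fin.last r) = ⊤ →
      Nat.card {i : Fin r // IsTrivialFactor k G (Subquot (N i.castSucc) (N i.succ))}
          - ∑ i : Fin r, h1Dim k G (Subquot (N i.castSucc) (N i.succ))
        ≤ Module.finrank k (grpRep k G (M ⧸ N 0)).ρ.invariants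
  | 0, _, _, _ => by simp
  | r + 1, N, hmono, htop => by
    classical
    have hstep := finrank_invariants_subquot_add_le (hmono (Fin.castSucc_le_succ 0))
    have htail := card_trivial_sub_sum_h1Dim_le_finrank_invariants_quotient hk r (N ∘ Fin.succ)
      (hmono.comp Fin.strictMono_succ.monotone) (by simpa using htop)
    simp only [Function.comp_apply, Fin.succ_castSucc, Nat.card_eq_fintype_card,
      Fintype.card_subtype] at htail
    rw [Nat.card_eq_fintype_card, Fintype.card_subtype, Fin.card_filter_univ_succ',
      Fin.sum_univ_succ]
    rw [Fin.castSucc_zero] at hstep ⊢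
    split_ifs with htriv
    · obtain ⟨i⟩ := htriv
      have := finrank_invariants_of_iso_trivial i
      have : h1Dim k G (Subquot (N 0) (N (Fin.succ 0))) = 0 := finrank_H1_of_iso_trivial hk i
      omega
    · omega

end ModulesOverGroupAlgebra

theorem statement0_general (k G : Type) [Field k] [Group G] [Finite G]
    (hk : Subsingleton (groupCohomology.H1 (Rep.trivial k G k)))
    (M : Type) [AddCommGroup M] [Module (MonoidAlgebra k G) M]
    [Module k M] [IsScalarTower k (MonoidAlgebra k G) M] [FiniteDimensional k M]
    (r : ℕ) (N : Fin (r + 1) → Submodule (MonoidAlgebra k G) M)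
    (hmono : Monotone N) (hbot : N 0 = ⊥) (htop : N (Fin.last r) = ⊤)
    (m n : ℕ)
    (hm : m = Nat.card
      {i : Fin r // IsTrivialFactor k G (Subquot (N i.castSucc) (N i.succ))})
    (hn : n = ∑ i : Fin r, h1Dim k G (Subquot (N i.castSucc) (N i.succ))) :
    m - n ≤ @Module.finrank k
      (@Subtype _ fun x => @Membership.mem _ _
        (@SetLike.instMembership _ _ (@Submodule.setLike k _ _ _ (RestrictScalars.module k _ M)))
        (@Representation.invariants k G _ _ _ _ (RestrictScalars.module k _ M)
          (Representation.ofModule (k := k) (G := G) M)) x) DivisionSemiring.toSemiring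
      (Submodule.addCommMonoid _) (Submodule.module _) := by
  have hquot := finrank_invariants_congr (grpRepIso (Submodule.quotEquivOfEqBot (N 0) hbot))
  subst hm hn
  exact hquot ▸ card_trivial_sub_sum_h1Dim_le_finrank_invariants_quotient hk r N hmono htop

/-- If `M` is a finite-dimensional `kG`-module with composition factors
`W_1, …, W_r`, exactly `m` of them trivial, `n = ∑ dim H¹(G, Wᵢ)`, `H¹(G, k) = 0` and `n < m`,
then the fixed-point space `M^G` has dimension at least `m - n`. -/
theorem statement0 (k G : Type) [Field k] [Group G] [Finite G]
    (hk : Subsingleton (groupCohomology.H1 (Rep.trivial k G k)))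
    (M : Type) [AddCommGroup M] [Module (MonoidAlgebra k G) M]
    [Module k M] [IsScalarTower k (MonoidAlgebra k G) M] [FiniteDimensional k M]
    (r : ℕ) (N : Fin (r + 1) → Submodule (MonoidAlgebra k G) M)
    (hmono : Monotone N) (hbot : N 0 = ⊥) (htop : N (Fin.last r) = ⊤)
    (hsimple : ∀ i : Fin r,
      IsSimpleModule (MonoidAlgebra k G) (Subquot (N i.castSucc) (N i.succ)))
    (m n : ℕ)
    (hm : m = Nat.card
      {i : Fin r // IsTrivialFactor k G (Subquot (N i.castSucc) (N i.succ))})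
    (hn : n = ∑ i : Fin r, h1Dim k G (Subquot (N i.castSucc) (N i.succ)))
    (hlt : n < m) :
    m - n ≤ @Module.finrank k
      (@Subtype _ fun x => @Membership.mem _ _
        (@SetLike.instMembership _ _ (@Submodule.setLike k _ _ _ (RestrictScalars.module k _ M)))
        (@Representation.invariants k G _ _ _ _ (RestrictScalars.module k _ M)
          (Representation.ofModule (k := k) (G := G) M)) x) DivisionSemiring.toSemiring
      (Submodule.addCommMonoid _) (Submodule.module _) :=
  statement0_general k G hk M r N hmono hbot htop m n hm hn
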